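/- For nonnegative integers α ≥ 1, det[y^{i-1} d^{j-2}/dx^{j-2} x^{i-1}]_{i=1..α+1; j=2..α+1} = (∏_{i=1}^{α-1} i!) · (x-y)^α, where the first column is (1, y, y², ..., y^α)ᵀ and column j (for j = 2,...,α+1) is the (j-2)-th derivative in x of (1, x, x², ..., x^α)ᵀ. -/

import Mathlib

/-!
Row `i` of the matrix pairs the monomial `t ^ i` with evaluation at `y` and with the
derivatives `(d/dt) ^ k` at `x`. Expanding `t ^ i = ∑ₗ (i choose l) x ^ (i - l) (t - x) ^ l` is a
unitriangular change of basis, so the determinant does not change when `x` is moved to `0`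
and `y` to `y - x`. At `x = 0` the `k`-th derivative column has the single entry `k !` in
row `k`, so shifting the columns cyclically (sign `(-1) ^ n`) gives an upper triangular matrix
with diagonal `0 !, …, (n - 1) !, (y - x) ^ n`.
-/

open Finset Matrix

namespace Matrix

variable {R : Type*} [CommRing R]

/-- Column `0` is evaluation of `t ^ i` at `y`, column `j ≥ 1` its `(j - 1)`-th derivative
at `x`. -/
def confluentVandermonde (x y : R) (n : ℕ) : Matrix (Fin (n + 1)) (Fin (n + 1)) R :=
  of fun i j => if (j : ℕ) = 0 then y ^ (i : ℕ)
    else ((i : ℕ).descFactorial (j - 1) : R) * x ^ ((i : ℕ) - (j - 1))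

def binomialShift (x : R) (m : ℕ) : Matrix (Fin m) (Fin m) R :=
  of fun i l => ((i : ℕ).choose l : R) * x ^ ((i : ℕ) - l)

theorem det_binomialShift (x : R) (m : ℕ) : (binomialShift x m).det = 1 := by
  rw [det_of_isLowerTriangular _ fun i l hil => by
    simp [binomialShift, Nat.choose_eq_zero_of_lt (show (i : ℕ) < l from hil)]]
  simp [binomialShift]

theorem confluentVandermonde_zero_apply_of_ne_zero (z : R) {n : ℕ} (l j : Fin (n + 1))
    (hj : (j : ℕ) ≠ 0) :
    confluentVandermonde 0 z n l j =
      if (l : ℕ) = j - 1 then ((l : ℕ).factorial : R) else 0 := by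
  simp only [confluentVandermonde, of_apply, if_neg hj]
  split_ifs with hl
  · simp [hl, Nat.descFactorial_self]
  · rcases lt_or_gt_of_ne hl with hlt | hgt
    · simp [Nat.descFactorial_eq_zero_iff_lt.mpr hlt]
    · simp [zero_pow (Nat.sub_ne_zero_of_lt hgt)]

theorem confluentVandermonde_eq_binomialShift_mul (x y : R) (n : ℕ) :
    confluentVandermonde x y n = binomialShift x (n + 1) * confluentVandermonde 0 (y - x) n := by
  ext i j
  rw [mul_apply]
  by_cases hj : (j : ℕ) = 0
  · have hbinom : y ^ (i : ℕ) = ∑ l ∈ range ((i : ℕ) + 1),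
        ((i : ℕ).choose l : R) * x ^ ((i : ℕ) - l) * (y - x) ^ l := by
      rw [← sub_add_cancel y x, add_pow, sub_add_cancel]
      exact sum_congr rfl fun l _ => by ring
    simp only [confluentVandermonde, binomialShift, of_apply, hj, if_true, hbinom]
    rw [Fin.sum_univ_eq_sum_range
      (fun l => ((i : ℕ).choose l : R) * x ^ ((i : ℕ) - l) * (y - x) ^ l)]
    refine sum_subset (range_subset_range.mpr (by omega)) fun l _ hl => ?_
    simp [Nat.choose_eq_zero_of_lt (show (i : ℕ) < l by simpa using hl)]
  · simp_rw [confluentVandermonde_zero_apply_of_ne_zero _ _ _ hj, mul_ite, mul_zero]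
    rw [Fintype.sum_eq_single ⟨(j : ℕ) - 1, by omega⟩
      fun l hl => if_neg fun h => hl (Fin.ext h)]
    simp only [confluentVandermonde, binomialShift, of_apply, if_neg hj,
      Nat.descFactorial_eq_factorial_mul_choose]
    push_cast
    ring

theorem isUpperTriangular_confluentVandermonde_zero_submatrix_finRotate (z : R) (n : ℕ) :
    ((confluentVandermonde 0 z n).submatrix id (finRotate (n + 1))).IsUpperTriangular := by
  intro l j hjl
  have hj : j ≠ Fin.last n := fun h => Fin.not_lt.mpr (Fin.le_last l) (h ▸ hjl)
  have hj_rot : (finRotate (n + 1) j : ℕ) = j + 1 := coe_finRotate_of_ne_last hj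
  rw [submatrix_apply, id, confluentVandermonde_zero_apply_of_ne_zero _ _ _ (by omega), if_neg]
  rw [hj_rot, Nat.add_sub_cancel]
  exact (show (j : ℕ) < l from hjl).ne'

theorem det_confluentVandermonde_zero (z : R) (n : ℕ) :
    (confluentVandermonde 0 z n).det = (∏ i ∈ range n, (i.factorial : R)) * (-z) ^ n := by
  have hdiag (i : Fin n) : confluentVandermonde 0 z n i.castSucc (finRotate (n + 1) i.castSucc) =
      ((i : ℕ).factorial : R) := by
    have hi_rot : (finRotate (n + 1) i.castSucc : ℕ) = i + 1 :=
      coe_finRotate_of_ne_last (Fin.castSucc_ne_last i)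
    rw [confluentVandermonde_zero_apply_of_ne_zero _ _ _ (by omega),
      if_pos (by rw [hi_rot, Fin.val_castSucc, Nat.add_sub_cancel]), Fin.val_castSucc]
  have hlast : confluentVandermonde 0 z n (Fin.last n) 0 = z ^ n := by
    simp [confluentVandermonde]
  have hrot := det_permute' (finRotate (n + 1)) (confluentVandermonde 0 z n)
  rw [det_of_isUpperTriangular (isUpperTriangular_confluentVandermonde_zero_submatrix_finRotate
    z n), Fin.prod_univ_castSucc, sign_finRotate] at hrot
  simp only [submatrix_apply, id, hdiag, finRotate_last, hlast, Nat.add_sub_cancel,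
    Fin.prod_univ_eq_prod_range (fun i => (i.factorial : R))] at hrot
  push_cast at hrot
  have hsign : ((-1 : R) ^ n) * (-1) ^ n = 1 := by rw [← mul_pow, neg_one_mul, neg_neg, one_pow]
  rw [neg_pow]
  linear_combination -(-1) ^ n * hrot - (confluentVandermonde 0 z n).det * hsign

theorem det_confluentVandermonde (x y : R) (n : ℕ) :
    (confluentVandermonde x y n).det = (∏ i ∈ range n, (i.factorial : R)) * (x - y) ^ n := by
  rw [confluentVandermonde_eq_binomialShift_mul, det_mul, det_binomialShift, one_mul,
    det_confluentVandermonde_zero, neg_sub]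

end Matrix

theorem stmt_12_general (α : ℕ) (x y : ℝ) :
    Matrix.det (Matrix.of fun i j : Fin (α + 1) =>
        if (j : ℕ) = 0 then y ^ (i : ℕ)
        else iteratedDeriv ((j : ℕ) - 1) (fun t : ℝ => t ^ (i : ℕ)) x) =
      (∏ i ∈ Finset.range α, (i.factorial : ℝ)) * (x - y) ^ α := by
  have hderiv : (Matrix.of fun i j : Fin (α + 1) =>
      if (j : ℕ) = 0 then y ^ (i : ℕ)
      else iteratedDeriv ((j : ℕ) - 1) (fun t : ℝ => t ^ (i : ℕ)) x) =
        confluentVandermonde x y α := by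
    ext i j
    simp [confluentVandermonde]
  rw [hderiv, det_confluentVandermonde]

/-- Confluent Vandermonde determinant: first column `(1,y,...,y^α)ᵀ`, column `j ≥ 2`
the `(j-2)`-th `x`-derivative of `(1,x,...,x^α)ᵀ`; its determinant equals
`(∏_{i=1}^{α-1} i!) (x-y)^α`. -/
theorem stmt_12 (α : ℕ) (hα : 1 ≤ α) (x y : ℝ) :
    Matrix.det (Matrix.of fun i j : Fin (α + 1) =>
        if (j : ℕ) = 0 then y ^ (i : ℕ)
        else iteratedDeriv ((j : ℕ) - 1) (fun t : ℝ => t ^ (i : ℕ)) x) =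
      (∏ i ∈ Finset.range α, (i.factorial : ℝ)) * (x - y) ^ α :=
  stmt_12_general α x y
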